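/- arXiv:1109.4367 — 5 statements merged into one kernel-verified Lean document; each statement's English description precedes it below -/
import Mathlib

section
/- Let G be an abelian topological group and let S and T be measure-preserving actions of G on probability spaces (X, μ) and (Y, ν), with Koopman representations U_S on L²(X, μ) and U_T on L²(Y, ν), and assume the maps g ↦ U_S(g)f and g ↦ U_T(g)h are continuous for all f ∈ L²(X, μ), h ∈ L²(Y, ν). Suppose there exist a sequence (g_n)_{n∈ℕ} in G and an at most countable subset {d_i : i ∈ J} of G whose generated subgroup is dense in G, and for each i ∈ J a subsequence (g_{n_k(i)})_{k∈ℕ} of (g_n), such that U_S(g_n) → I in the strong operator topology as n → ∞, and U_T(g_{n_k(i)}) → U_T(d_i) in the strong operator topology as k → ∞, for each i ∈ J. If φ ∈ L²(X, μ) is a cyclic vector for U_S and ψ ∈ L²(Y, ν) is a cyclic vector for U_T, then the function (x, y) ↦ φ(x)ψ(y) is a cyclic vector for the Koopman representation of the product action S × T of G on (X × Y, μ ⊗ ν), where (S × T)_g(x, y) = (S_g x, T_g y). -/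
/-!
Let `M` be the closed span of the `W`-orbit of `φ ⊗ ψ`. Since `W g (f ⊗ h) = U g f ⊗ V g h`,
applying `W (g_{n_k(i)})` (or its inverse) to an element `f ⊗ h` of `M` and letting `k → ∞`
gives `f ⊗ V (± d i) h ∈ M`, because `U (g_{n_k(i)}) → 1`. Hence the closed set of those `s`
with `U g φ ⊗ V g (V s ψ) ∈ M` for all `g` contains the subgroup generated by the `d i`, hence
is all of `G`, so `M` contains every `U a φ ⊗ V b ψ`. By cyclicity of `φ` and `ψ`, `M` then
contains all elementary tensors, and these are total in `L²(μ ⊗ ν)`: they include the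
indicators of measurable rectangles, which generate the product σ-algebra.
-/

open Filter Topology MeasureTheory
open scoped ENNReal InnerProductSpace

section Tensor

variable {X Y : Type*} [MeasurableSpace X] [MeasurableSpace Y] {μ : Measure X} {ν : Measure Y}

theorem eLpNorm_mul_prod [SFinite ν] {f : X → ℂ} {h : Y → ℂ} (hf : AEStronglyMeasurable f μ)
    (hh : AEStronglyMeasurable h ν) {p : ℝ≥0∞} (hp0 : p ≠ 0) (hp : p ≠ ∞) :
    eLpNorm (fun z : X × Y => f z.1 * h z.2) p (μ.prod ν) = eLpNorm f p μ * eLpNorm h p ν := by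
  simp only [eLpNorm_eq_lintegral_rpow_enorm_toReal hp0 hp, enorm_mul,
    ENNReal.mul_rpow_of_nonneg _ _ ENNReal.toReal_nonneg]
  rw [lintegral_prod_mul (hf.enorm.pow_const _) (hh.enorm.pow_const _),
    ENNReal.mul_rpow_of_nonneg _ _ (by positivity)]

variable [SFinite ν]

theorem memLp_two_mul_prod (f : Lp ℂ 2 μ) (h : Lp ℂ 2 ν) :
    MemLp (fun z : X × Y => f z.1 * h z.2) 2 (μ.prod ν) := by
  have hf := Lp.aestronglyMeasurable f
  have hh := Lp.aestronglyMeasurable h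
  refine ⟨hf.comp_fst.mul hh.comp_snd, ?_⟩
  rw [eLpNorm_mul_prod hf hh two_ne_zero ENNReal.ofNat_ne_top]
  exact ENNReal.mul_lt_top (Lp.eLpNorm_lt_top f) (Lp.eLpNorm_lt_top h)

noncomputable def tensorLp (f : Lp ℂ 2 μ) (h : Lp ℂ 2 ν) : Lp ℂ 2 (μ.prod ν) :=
  (memLp_two_mul_prod f h).toLp _

theorem coeFn_tensorLp (f : Lp ℂ 2 μ) (h : Lp ℂ 2 ν) :
    ⇑(tensorLp f h) =ᵐ[μ.prod ν] fun z : X × Y => f z.1 * h z.2 :=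
  (memLp_two_mul_prod f h).coeFn_toLp

theorem norm_tensorLp (f : Lp ℂ 2 μ) (h : Lp ℂ 2 ν) : ‖tensorLp f h‖ = ‖f‖ * ‖h‖ := by
  rw [Lp.norm_def, Lp.norm_def, Lp.norm_def, eLpNorm_congr_ae (coeFn_tensorLp f h),
    eLpNorm_mul_prod (Lp.aestronglyMeasurable f) (Lp.aestronglyMeasurable h) two_ne_zero
      ENNReal.ofNat_ne_top, ENNReal.toReal_mul]

theorem tensorLp_add_left (f f' : Lp ℂ 2 μ) (h : Lp ℂ 2 ν) :
    tensorLp (f + f') h = tensorLp f h + tensorLp f' h := by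
  apply Lp.ext
  filter_upwards [coeFn_tensorLp (f + f') h, Lp.coeFn_add (tensorLp f h) (tensorLp f' h),
    coeFn_tensorLp f h, coeFn_tensorLp f' h,
    Measure.quasiMeasurePreserving_fst.ae_eq_comp (Lp.coeFn_add f f')] with z h0 h1 h2 h3 h4
  simp only [Function.comp_apply, Pi.add_apply] at *
  rw [h0, h1, h2, h3, h4, add_mul]

theorem tensorLp_smul_left (c : ℂ) (f : Lp ℂ 2 μ) (h : Lp ℂ 2 ν) :
    tensorLp (c • f) h = c • tensorLp f h := by
  apply Lp.ext
  filter_upwards [coeFn_tensorLp (c • f) h, Lp.coeFn_smul c (tensorLp f h), coeFn_tensorLp f h,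
    Measure.quasiMeasurePreserving_fst.ae_eq_comp (Lp.coeFn_smul c f)] with z h0 h1 h2 h3
  simp only [Function.comp_apply, Pi.smul_apply, smul_eq_mul] at *
  rw [h0, h1, h2, h3, mul_assoc]

theorem tensorLp_add_right (f : Lp ℂ 2 μ) (h h' : Lp ℂ 2 ν) :
    tensorLp f (h + h') = tensorLp f h + tensorLp f h' := by
  apply Lp.ext
  filter_upwards [coeFn_tensorLp f (h + h'), Lp.coeFn_add (tensorLp f h) (tensorLp f h'),
    coeFn_tensorLp f h, coeFn_tensorLp f h',
    Measure.quasiMeasurePreserving_snd.ae_eq_comp (Lp.coeFn_add h h')] with z h0 h1 h2 h3 h4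
  simp only [Function.comp_apply, Pi.add_apply] at *
  rw [h0, h1, h2, h3, h4, mul_add]

theorem tensorLp_smul_right (c : ℂ) (f : Lp ℂ 2 μ) (h : Lp ℂ 2 ν) :
    tensorLp f (c • h) = c • tensorLp f h := by
  apply Lp.ext
  filter_upwards [coeFn_tensorLp f (c • h), Lp.coeFn_smul c (tensorLp f h), coeFn_tensorLp f h,
    Measure.quasiMeasurePreserving_snd.ae_eq_comp (Lp.coeFn_smul c h)] with z h0 h1 h2 h3
  simp only [Function.comp_apply, Pi.smul_apply, smul_eq_mul] at *
  rw [h0, h1, h2, h3, mul_left_comm]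

variable (μ ν) in
noncomputable def tensorLpCLM : Lp ℂ 2 μ →L[ℂ] Lp ℂ 2 ν →L[ℂ] Lp ℂ 2 (μ.prod ν) :=
  LinearMap.mkContinuous₂
    (LinearMap.mk₂ ℂ tensorLp tensorLp_add_left tensorLp_smul_left tensorLp_add_right
      tensorLp_smul_right) 1
    (fun f h => by rw [LinearMap.mk₂_apply, norm_tensorLp, one_mul])

theorem continuous_tensorLp :
    Continuous fun q : Lp ℂ 2 μ × Lp ℂ 2 ν => tensorLp q.1 q.2 :=
  (tensorLpCLM μ ν).continuous₂

theorem tensorLp_indicatorConstLp_one {A : Set X} {B : Set Y} (hA : MeasurableSet A)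
    (hB : MeasurableSet B) (hμA : μ A ≠ ∞) (hνB : ν B ≠ ∞) :
    tensorLp (indicatorConstLp 2 hA hμA (1 : ℂ)) (indicatorConstLp 2 hB hνB (1 : ℂ)) =
      indicatorConstLp 2 (hA.prod hB) (by rw [Measure.prod_prod]; exact ENNReal.mul_ne_top hμA hνB)
        (1 : ℂ) := by
  apply Lp.ext
  filter_upwards [coeFn_tensorLp (indicatorConstLp 2 hA hμA (1 : ℂ))
      (indicatorConstLp 2 hB hνB (1 : ℂ)),
    indicatorConstLp_coeFn (p := 2) (hs := hA.prod hB) (c := (1 : ℂ)),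
    Measure.quasiMeasurePreserving_fst.ae_eq_comp
      (indicatorConstLp_coeFn (p := 2) (hs := hA) (hμs := hμA) (c := (1 : ℂ))),
    Measure.quasiMeasurePreserving_snd.ae_eq_comp
      (indicatorConstLp_coeFn (p := 2) (hs := hB) (hμs := hνB) (c := (1 : ℂ)))]
    with z h0 h1 h2 h3
  simp only [Function.comp_apply] at h2 h3
  rw [h0, h1, h2, h3]
  exact (Set.indicator_prod_one (M₀ := ℂ)).symm

end Tensor

theorem ContinuousLinearMap.map_mem_of_mem_topologicalClosure_span {𝕜 E F : Type*} [Semiring 𝕜]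
    [AddCommMonoid E] [Module 𝕜 E] [TopologicalSpace E] [ContinuousAdd E]
    [ContinuousConstSMul 𝕜 E] [AddCommMonoid F] [Module 𝕜 F] [TopologicalSpace F]
    (L : E →L[𝕜] F) {M : Submodule 𝕜 F} (hM : IsClosed (M : Set F)) {s : Set E}
    (hsM : ∀ x ∈ s, L x ∈ M) {x : E} (hx : x ∈ (Submodule.span 𝕜 s).topologicalClosure) :
    L x ∈ M :=
  Submodule.topologicalClosure_minimal _ (t := M.comap (L : E →ₗ[𝕜] F))
    (Submodule.span_le.mpr fun y hy => hsM y hy) (hM.preimage L.continuous) hx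

theorem MeasureTheory.Integrable.ae_eq_zero_of_forall_setIntegral_prod_eq_zero
    {X Y E : Type*} [MeasurableSpace X] [MeasurableSpace Y] [NormedAddCommGroup E]
    [NormedSpace ℝ E] [CompleteSpace E] {ρ : Measure (X × Y)} {F : X × Y → E} (hF : Integrable F ρ)
    (hrect : ∀ A B, MeasurableSet A → MeasurableSet B → ∫ z in A ×ˢ B, F z ∂ρ = 0) :
    F =ᵐ[ρ] 0 := by
  suffices ∀ s, MeasurableSet s → ∫ z in s, F z ∂ρ = 0 from
    hF.ae_eq_zero_of_forall_setIntegral_eq_zero fun s hs _ => this s hs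
  intro s hs
  induction s, hs using MeasurableSpace.induction_on_inter generateFrom_prod.symm
    isPiSystem_prod with
  | empty => simp
  | basic _ hrect' =>
    obtain ⟨A, hA, B, hB, rfl⟩ := hrect'
    exact hrect A B hA hB
  | compl t ht iht =>
    have huniv := hrect Set.univ Set.univ MeasurableSet.univ MeasurableSet.univ
    rw [Set.univ_prod_univ, Measure.restrict_univ] at huniv
    rw [← huniv, ← integral_add_compl ht hF, iht, zero_add]
  | iUnion t hdisj ht iht =>
    rw [integral_iUnion ht hdisj hF.integrableOn]
    simp [iht]

section Totality

variable {X Y : Type*} [MeasurableSpace X] [MeasurableSpace Y] {μ : Measure X} {ν : Measure Y}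
  [IsFiniteMeasure μ] [IsFiniteMeasure ν]

theorem eq_zero_of_forall_inner_tensorLp_eq_zero {F : Lp ℂ 2 (μ.prod ν)}
    (hF : ∀ f h, ⟪tensorLp f h, F⟫_ℂ = 0) : F = 0 := by
  have hFi : Integrable F (μ.prod ν) := (Lp.memLp F).integrable one_le_two
  refine Lp.ext ((hFi.ae_eq_zero_of_forall_setIntegral_prod_eq_zero fun A B hA hB => ?_).trans
    (Lp.coeFn_zero ℂ 2 (μ.prod ν)).symm)
  rw [← L2.inner_indicatorConstLp_one (hA.prod hB) (measure_ne_top _ _),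
    ← tensorLp_indicatorConstLp_one hA hB (measure_ne_top μ A) (measure_ne_top ν B)]
  exact hF _ _

theorem Submodule.eq_top_of_tensorLp_mem {M : Submodule ℂ (Lp ℂ 2 (μ.prod ν))}
    (hM : IsClosed (M : Set (Lp ℂ 2 (μ.prod ν)))) {s : Set (Lp ℂ 2 μ)} {t : Set (Lp ℂ 2 ν)}
    (hs : (span ℂ s).topologicalClosure = ⊤) (ht : (span ℂ t).topologicalClosure = ⊤)
    (hst : ∀ f ∈ s, ∀ h ∈ t, tensorLp f h ∈ M) : M = ⊤ := by
  have hmem (f h) : tensorLp f h ∈ M :=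
    ((tensorLpCLM μ ν).flip h).map_mem_of_mem_topologicalClosure_span hM
      (fun f hf => (tensorLpCLM μ ν f).map_mem_of_mem_topologicalClosure_span hM (hst f hf)
        (ht ▸ mem_top))
      (hs ▸ mem_top)
  have : CompleteSpace M := hM.completeSpace_coe
  rw [← Submodule.orthogonal_eq_bot_iff, Submodule.eq_bot_iff]
  exact fun F hF => eq_zero_of_forall_inner_tensorLp_eq_zero fun f h =>
    (M.mem_orthogonal F).1 hF _ (hmem f h)

end Totality

section Koopman

variable {X : Type*} [MeasurableSpace X] {μ : Measure X}

def IsKoopman (μ : Measure X) (e : X → X) (A : Lp ℂ 2 μ →L[ℂ] Lp ℂ 2 μ) : Prop :=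
  ∀ f : Lp ℂ 2 μ, ⇑(A f) =ᵐ[μ] fun x => f (e x)

theorem isKoopman_one : IsKoopman μ id 1 := fun _ => ae_eq_refl _

namespace IsKoopman

variable {e e' : X → X} {A B : Lp ℂ 2 μ →L[ℂ] Lp ℂ 2 μ}

theorem unique (hA : IsKoopman μ e A) (hB : IsKoopman μ e B) : A = B :=
  ContinuousLinearMap.ext fun f => Lp.ext ((hA f).trans (hB f).symm)

theorem mul (hA : IsKoopman μ e A) (hB : IsKoopman μ e' B)
    (he : Measure.QuasiMeasurePreserving e μ μ) : IsKoopman μ (e' ∘ e) (A * B) :=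
  fun f => (hA (B f)).trans (he.ae_eq_comp (hB f))

theorem norm_map (hA : IsKoopman μ e A) (he : MeasurePreserving e μ μ) (f : Lp ℂ 2 μ) :
    ‖A f‖ = ‖f‖ := by
  rw [Lp.norm_def, Lp.norm_def, eLpNorm_congr_ae (hA f)]
  exact congrArg ENNReal.toReal (eLpNorm_comp_measurePreserving (Lp.aestronglyMeasurable f) he)

theorem apply_tensorLp {Y : Type*} [MeasurableSpace Y] {ν : Measure Y} [SFinite μ] [SFinite ν]
    {eY : Y → Y} {AY : Lp ℂ 2 ν →L[ℂ] Lp ℂ 2 ν}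
    {C : Lp ℂ 2 (μ.prod ν) →L[ℂ] Lp ℂ 2 (μ.prod ν)} (hC : IsKoopman (μ.prod ν) (Prod.map e eY) C)
    (hA : IsKoopman μ e A) (hAY : IsKoopman ν eY AY) (he : MeasurePreserving e μ μ)
    (heY : MeasurePreserving eY ν ν) (f : Lp ℂ 2 μ) (h : Lp ℂ 2 ν) :
    C (tensorLp f h) = tensorLp (A f) (AY h) := by
  apply Lp.ext
  filter_upwards [hC (tensorLp f h),
    (he.prod heY).quasiMeasurePreserving.ae_eq_comp (coeFn_tensorLp f h),
    coeFn_tensorLp (A f) (AY h), Measure.quasiMeasurePreserving_fst.ae_eq_comp (hA f),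
    Measure.quasiMeasurePreserving_snd.ae_eq_comp (hAY h)] with z h0 h1 h2 h3 h4
  simp only [Function.comp_apply, Prod.map_fst, Prod.map_snd] at h1 h3 h4
  rw [h0, h1, h2, h3, h4]

end IsKoopman

variable {G : Type*} [AddGroup G] {S : G → X ≃ᵐ X} {U : G → Lp ℂ 2 μ →L[ℂ] Lp ℂ 2 μ}

theorem koopman_add (hS : ∀ g g', S (g + g') = (S g').trans (S g))
    (hSm : ∀ g, MeasurePreserving (S g) μ μ) (hU : ∀ g, IsKoopman μ (S (-g)) (U g)) (a b : G) :
    U (a + b) = U a * U b := by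
  refine (hU (a + b)).unique ?_
  rw [neg_add_rev, hS, MeasurableEquiv.coe_trans]
  exact (hU a).mul (hU b) (hSm _).quasiMeasurePreserving

theorem koopman_zero (hS : ∀ g g', S (g + g') = (S g').trans (S g))
    (hU : ∀ g, IsKoopman μ (S (-g)) (U g)) : U 0 = 1 := by
  have hS0 : ⇑(S 0) = id := funext fun x =>
    (S 0).injective (by rw [← MeasurableEquiv.trans_apply, ← hS, zero_add]; rfl)
  refine (hU 0).unique ?_
  rw [neg_zero, hS0]
  exact isKoopman_one

end Koopman

theorem tendsto_apply_neg_of_tendsto {G 𝕜 E ι : Type*} [AddGroup G] [Semiring 𝕜]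
    [SeminormedAddCommGroup E] [Module 𝕜 E] {V : G → E →L[𝕜] E}
    (hVV : ∀ a b, V (a + b) = V a * V b) (hV0 : V 0 = 1) (hV : ∀ g x, ‖V g x‖ = ‖x‖)
    {l : Filter ι} {a : ι → G} {δ : G} (hlim : ∀ x, Tendsto (fun k => V (a k) x) l (𝓝 (V δ x)))
    (x : E) : Tendsto (fun k => V (-a k) x) l (𝓝 (V (-δ) x)) := by
  have hinv (g : G) (y : E) : V g (V (-g) y) = y := by
    rw [← mul_apply_eq_comp, ← hVV, add_neg_cancel, hV0, one_apply_eq_self]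
  have hdist (k : ι) : ‖V (-a k) x - V (-δ) x‖ = ‖x - V (a k) (V (-δ) x)‖ := by
    rw [← hV (a k), map_sub, hinv]
  have hlim' := hlim (V (-δ) x)
  rw [hinv] at hlim'
  rw [tendsto_iff_norm_sub_tendsto_zero]
  simp only [hdist]
  simpa using (tendsto_const_nhds (x := x)).sub hlim' |>.norm

theorem apply_mem_topologicalClosure_span_orbit {R E G : Type*} [Semiring R] [AddCommMonoid E]
    [Module R E] [TopologicalSpace E] [ContinuousAdd E] [ContinuousConstSMul R E] [Add G]
    {W : G → E →L[R] E} {x : E} (hW : ∀ a b, W a (W b x) = W (a + b) x) (g : G) {y : E}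
    (hy : y ∈ (Submodule.span R (Set.range fun g => W g x)).topologicalClosure) :
    W g y ∈ (Submodule.span R (Set.range fun g => W g x)).topologicalClosure := by
  refine (W g).map_mem_of_mem_topologicalClosure_span
    (Submodule.isClosed_topologicalClosure _) ?_ hy
  rintro _ ⟨b, rfl⟩
  rw [hW]
  exact Submodule.le_topologicalClosure _ (Submodule.subset_span ⟨g + b, rfl⟩)

section Shifts

variable {X Y : Type*} [MeasurableSpace X] [MeasurableSpace Y] {μ : Measure X} {ν : Measure Y}
  [SFinite ν] {M : Set (Lp ℂ 2 (μ.prod ν))}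

theorem tensorLp_mem_of_tendsto (hM : IsClosed M) {ι : Type*} {l : Filter ι} [l.NeBot]
    {A : ι → Lp ℂ 2 μ →L[ℂ] Lp ℂ 2 μ} {B : ι → Lp ℂ 2 ν →L[ℂ] Lp ℂ 2 ν}
    {C : ι → Lp ℂ 2 (μ.prod ν) →L[ℂ] Lp ℂ 2 (μ.prod ν)} (hCM : ∀ k, ∀ F ∈ M, C k F ∈ M)
    (hC : ∀ k f h, C k (tensorLp f h) = tensorLp (A k f) (B k h)) {f f' : Lp ℂ 2 μ}
    {h h' : Lp ℂ 2 ν} (hA : Tendsto (fun k => A k f) l (𝓝 f'))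
    (hB : Tendsto (fun k => B k h) l (𝓝 h')) (hfh : tensorLp f h ∈ M) : tensorLp f' h' ∈ M :=
  hM.mem_of_tendsto ((continuous_tensorLp.tendsto _).comp (hA.prodMk_nhds hB))
    (Eventually.of_forall fun k => by
      rw [Function.comp_apply, ← hC]
      exact hCM k _ hfh)

theorem tensorLp_mem_of_dense_shifts {G J : Type*} [AddCommGroup G] [TopologicalSpace G]
    (hM : IsClosed M) {V : G → Lp ℂ 2 ν →L[ℂ] Lp ℂ 2 ν} (hVV : ∀ a b, V (a + b) = V a * V b)
    {φ : G → Lp ℂ 2 μ} {ψ : Lp ℂ 2 ν} (hψ : Continuous fun g => V g ψ) {d : J → G}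
    (hd : Dense ((AddSubgroup.closure (Set.range d) : AddSubgroup G) : Set G))
    (hshift : ∀ i f h, tensorLp f h ∈ M →
      tensorLp f (V (d i) h) ∈ M ∧ tensorLp f (V (-d i) h) ∈ M)
    (horbit : ∀ g, tensorLp (φ g) (V g ψ) ∈ M) (a b : G) : tensorLp (φ a) (V b ψ) ∈ M := by
  have key : ∀ s g, tensorLp (φ g) (V g (V s ψ)) ∈ M := by
    refine hd.induction (fun s hs => ?_) ?_
    · induction hs using AddSubgroup.closure_induction_left with
      | zero => simpa [← mul_apply_eq_comp, ← hVV] using horbit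
      | add_left x hx s _ ih =>
        obtain ⟨i, rfl⟩ := hx
        intro g
        have := (hshift i _ _ (ih g)).1
        simp only [← mul_apply_eq_comp, ← hVV] at this ⊢
        rwa [add_left_comm]
      | neg_add_cancel x hx s _ ih =>
        obtain ⟨i, rfl⟩ := hx
        intro g
        have := (hshift i _ _ (ih g)).2
        simp only [← mul_apply_eq_comp, ← hVV] at this ⊢
        rwa [add_left_comm]
    · simp only [Set.ofPred_forall]
      exact isClosed_iInter fun g => hM.preimage
        ((tensorLpCLM μ ν (φ g)).continuous.comp ((V g).continuous.comp hψ))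
  simpa [← mul_apply_eq_comp, ← hVV] using key (b - a) a

end Shifts

theorem stmt2_general {G : Type*} [AddCommGroup G] [TopologicalSpace G]
    {X Y : Type*} [MeasurableSpace X] [MeasurableSpace Y]
    (μ : Measure X) (ν : Measure Y) [IsProbabilityMeasure μ] [IsProbabilityMeasure ν]
    (S : G → X ≃ᵐ X) (T : G → Y ≃ᵐ Y)
    (hS : ∀ g g' : G, S (g + g') = (S g').trans (S g))
    (hT : ∀ g g' : G, T (g + g') = (T g').trans (T g))
    (hSm : ∀ g, MeasurePreserving (S g) μ μ)
    (hTm : ∀ g, MeasurePreserving (T g) ν ν)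
    (U : G → (Lp ℂ 2 μ →L[ℂ] Lp ℂ 2 μ))
    (V : G → (Lp ℂ 2 ν →L[ℂ] Lp ℂ 2 ν))
    (W : G → (Lp ℂ 2 (μ.prod ν) →L[ℂ] Lp ℂ 2 (μ.prod ν)))
    (hU : ∀ g (f : Lp ℂ 2 μ), ⇑(U g f) =ᵐ[μ] fun x => f (S (-g) x))
    (hV : ∀ g (h : Lp ℂ 2 ν), ⇑(V g h) =ᵐ[ν] fun y => h (T (-g) y))
    (hW : ∀ g (F : Lp ℂ 2 (μ.prod ν)),
      ⇑(W g F) =ᵐ[μ.prod ν] fun p => F (S (-g) p.1, T (-g) p.2))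
    (hVc : ∀ h : Lp ℂ 2 ν, Continuous fun g => V g h)
    (gs : ℕ → G) {J : Type*} (d : J → G)
    (hdense : Dense ((AddSubgroup.closure (Set.range d) : AddSubgroup G) : Set G))
    (n : J → ℕ → ℕ) (hn : ∀ i, StrictMono (n i))
    (hUI : ∀ f : Lp ℂ 2 μ, Tendsto (fun m => U (gs m) f) atTop (𝓝 f))
    (hVd : ∀ i, ∀ h : Lp ℂ 2 ν,
      Tendsto (fun k => V (gs (n i k)) h) atTop (𝓝 (V (d i) h)))
    (φ : Lp ℂ 2 μ) (ψ : Lp ℂ 2 ν)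
    (hφ : (Submodule.span ℂ (Set.range fun g => U g φ)).topologicalClosure = ⊤)
    (hψ : (Submodule.span ℂ (Set.range fun g => V g ψ)).topologicalClosure = ⊤)
    (Φ : Lp ℂ 2 (μ.prod ν))
    (hΦ : ⇑Φ =ᵐ[μ.prod ν] fun p => φ p.1 * ψ p.2) :
    (Submodule.span ℂ (Set.range fun g => W g Φ)).topologicalClosure = ⊤ := by
  have hUU := koopman_add hS hSm hU
  have hVV := koopman_add hT hTm hV
  have hU0 := koopman_zero hS hU
  have hWt (g) := IsKoopman.apply_tensorLp (hW g) (hU g) (hV g) (hSm (-g)) (hTm (-g))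
  have hΦt : Φ = tensorLp φ ψ := Lp.ext (hΦ.trans (coeFn_tensorLp φ ψ).symm)
  set M := (Submodule.span ℂ (Set.range fun g => W g Φ)).topologicalClosure
  have hM : IsClosed (M : Set (Lp ℂ 2 (μ.prod ν))) := Submodule.isClosed_topologicalClosure _
  have hMW : ∀ g, ∀ F ∈ M, W g F ∈ M := apply_mem_topologicalClosure_span_orbit fun a b => by
    simp only [hΦt, hWt, hUU, hVV, mul_apply_eq_comp]
  have horbit (g : G) : tensorLp (U g φ) (V g ψ) ∈ M := by
    rw [← hWt, ← hΦt]
    exact Submodule.le_topologicalClosure _ (Submodule.subset_span (Set.mem_range_self g))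
  have hUsub (i : J) (f : Lp ℂ 2 μ) : Tendsto (fun k => U (gs (n i k)) f) atTop (𝓝 f) :=
    (hUI f).comp (hn i).tendsto_atTop
  have hUneg (i : J) (f : Lp ℂ 2 μ) : Tendsto (fun k => U (-gs (n i k)) f) atTop (𝓝 f) := by
    simpa [hU0] using tendsto_apply_neg_of_tendsto hUU hU0
      (fun g => IsKoopman.norm_map (hU g) (hSm _)) (δ := 0) (by simpa [hU0] using hUsub i) f
  have hVneg (i : J) := tendsto_apply_neg_of_tendsto hVV (koopman_zero hT hV)
    (fun g => IsKoopman.norm_map (hV g) (hTm _)) (hVd i)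
  refine Submodule.eq_top_of_tensorLp_mem hM hφ hψ ?_
  rintro _ ⟨a, rfl⟩ _ ⟨b, rfl⟩
  refine tensorLp_mem_of_dense_shifts hM hVV (hVc ψ) hdense (fun i f h hfh => ⟨?_, ?_⟩) horbit a b
  · exact tensorLp_mem_of_tendsto hM (fun _ => hMW _) (fun _ => hWt _) (hUsub i f) (hVd i h) hfh
  · exact tensorLp_mem_of_tendsto hM (fun _ => hMW _) (fun _ => hWt _) (hUneg i f) (hVneg i h) hfh

/-- Lemma 2.3(1) for Koopman representations: if `U(g_n) → I` strongly, and along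
suitable subsequences `V(g_{n_k(i)}) → V(d_i)` strongly for a countable family `(d_i)`
generating a dense subgroup of the abelian topological group `G`, then the product of
cyclic vectors `φ ⊗ ψ` is a cyclic vector for the Koopman representation of the
product action `S × T`. -/
theorem stmt2 {G : Type*} [AddCommGroup G] [TopologicalSpace G] [IsTopologicalAddGroup G]
    {X Y : Type*} [MeasurableSpace X] [MeasurableSpace Y]
    (μ : Measure X) (ν : Measure Y) [IsProbabilityMeasure μ] [IsProbabilityMeasure ν]
    (S : G → X ≃ᵐ X) (T : G → Y ≃ᵐ Y)
    (hS : ∀ g g' : G, S (g + g') = (S g').trans (S g))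
    (hT : ∀ g g' : G, T (g + g') = (T g').trans (T g))
    (hSm : ∀ g, MeasurePreserving (S g) μ μ)
    (hTm : ∀ g, MeasurePreserving (T g) ν ν)
    (U : G → (Lp ℂ 2 μ →L[ℂ] Lp ℂ 2 μ))
    (V : G → (Lp ℂ 2 ν →L[ℂ] Lp ℂ 2 ν))
    (W : G → (Lp ℂ 2 (μ.prod ν) →L[ℂ] Lp ℂ 2 (μ.prod ν)))
    (hU : ∀ g (f : Lp ℂ 2 μ), ⇑(U g f) =ᵐ[μ] fun x => f (S (-g) x))
    (hV : ∀ g (h : Lp ℂ 2 ν), ⇑(V g h) =ᵐ[ν] fun y => h (T (-g) y))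
    (hW : ∀ g (F : Lp ℂ 2 (μ.prod ν)),
      ⇑(W g F) =ᵐ[μ.prod ν] fun p => F (S (-g) p.1, T (-g) p.2))
    (hUc : ∀ f : Lp ℂ 2 μ, Continuous fun g => U g f)
    (hVc : ∀ h : Lp ℂ 2 ν, Continuous fun g => V g h)
    (gs : ℕ → G) {J : Type*} [Countable J] (d : J → G)
    (hdense : Dense ((AddSubgroup.closure (Set.range d) : AddSubgroup G) : Set G))
    (n : J → ℕ → ℕ) (hn : ∀ i, StrictMono (n i))
    (hUI : ∀ f : Lp ℂ 2 μ, Tendsto (fun m => U (gs m) f) atTop (𝓝 f))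
    (hVd : ∀ i, ∀ h : Lp ℂ 2 ν,
      Tendsto (fun k => V (gs (n i k)) h) atTop (𝓝 (V (d i) h)))
    (φ : Lp ℂ 2 μ) (ψ : Lp ℂ 2 ν)
    (hφ : (Submodule.span ℂ (Set.range fun g => U g φ)).topologicalClosure = ⊤)
    (hψ : (Submodule.span ℂ (Set.range fun g => V g ψ)).topologicalClosure = ⊤)
    (Φ : Lp ℂ 2 (μ.prod ν))
    (hΦ : ⇑Φ =ᵐ[μ.prod ν] fun p => φ p.1 * ψ p.2) :
    (Submodule.span ℂ (Set.range fun g => W g Φ)).topologicalClosure = ⊤ :=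
  stmt2_general μ ν S T hS hT hSm hTm U V W hU hV hW hVc gs d hdense n hn hUI hVd φ ψ hφ hψ Φ hΦ
end

section
/- Let m ≥ 1 and let (g_k)_{k∈ℕ} be a sequence in ℝ^m with ‖g_k‖ → ∞. Then there exist a subsequence (g_{k_n})_{n∈ℕ}, finite subsets C_n ⊂ ℝ^m with #C_n > 1, and open boxes F_n = (−a_n^{(1)}, a_n^{(1)}) × ⋯ × (−a_n^{(m)}, a_n^{(m)}) with a_n^{(i)} > 0 and a_n^{(i)} → ∞ as n → ∞ for each i, such that: (a) F_{n−1} + C_n ⊆ F_n for all n ≥ 1; (b) the translates F_{n−1} + c, c ∈ C_n, are pairwise disjoint; (c) the infinite product ∏_{n≥1} λ(F_n)/(λ(F_{n−1}) · #C_n) converges (is finite), where λ is Lebesgue measure on ℝ^m; and (d) #(C_n ∩ (C_n − g_{k_n}))/#C_n → 1 as n → ∞. -/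
/-!
Choose `k n` inductively so that `v = g (k n)` is much longer than the box `F n` of half-sides
`a = a n`, and let `I` be a coordinate with `|v I| = ‖v‖`. The set `C n` is the sum of the
progression `{j • v : |j| ≤ 2 ^ n}` and a grid of step `2 a` (the side lengths of `F n`), whose
extent in coordinate `I` is just below `|v I|` and in every other coordinate is far larger than
`4 ^ n ‖v‖`. Translates of `F n` by distinct points of `C n` are disjoint: distinct grid points
differ by a full side in some coordinate, and distinct progression indices differ by at least
`|v I|` in coordinate `I`, more than the grid can compensate. These translates fill the box
`F (n + 1)` up to a factor at most `1 + 2⁻ⁿ` per coordinate, which makes the product of volume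
ratios converge, and `C n ∩ (C n - v)` contains all but one of the `2 ^ (n + 1) + 1` layers of the
progression.
-/

open Filter Topology MeasureTheory

noncomputable section

namespace RigidCF

variable {m : ℕ}

def box (a : Fin m → ℝ) : Set (Fin m → ℝ) := Set.univ.pi fun i => Set.Ioo (-a i) (a i)

theorem mem_box {a x : Fin m → ℝ} : x ∈ box a ↔ ∀ i, |x i| < a i := by
  simp only [box, Set.mem_univ_pi, Set.mem_Ioo, abs_lt]

theorem toReal_volume_box {a : Fin m → ℝ} (ha : ∀ i, 0 ≤ a i) :
    (volume (box a)).toReal = ∏ i, 2 * a i := by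
  rw [box, volume_pi_pi, ENNReal.toReal_prod]
  refine Finset.prod_congr rfl fun i _ => ?_
  rw [Real.volume_Ioo, ENNReal.toReal_ofReal (by linarith [ha i])]
  ring

theorem add_mem_box {a a' c x : Fin m → ℝ} (hx : x ∈ box a) (hc : ∀ i, a i + |c i| ≤ a' i) :
    x + c ∈ box a' := by
  rw [mem_box] at hx ⊢
  intro i
  calc |x i + c i| ≤ |x i| + |c i| := abs_add_le _ _
    _ < a i + |c i| := by linarith [hx i]
    _ ≤ a' i := hc i

theorem disjoint_image_add_box {a c c' : Fin m → ℝ} {i : Fin m} (h : 2 * a i ≤ |c i - c' i|) :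
    Disjoint ((· + c) '' box a) ((· + c') '' box a) := by
  rw [Set.disjoint_left]
  rintro _ ⟨x, hx, rfl⟩ ⟨x', hx', hxx'⟩
  have hi : c i - c' i = x' i - x i := by
    have := congrFun hxx' i
    simp only [Pi.add_apply] at this
    linarith
  rw [mem_box] at hx hx'
  linarith [abs_sub (x' i) (x i), hx i, hx' i, hi ▸ h]

theorem exists_tendsto_prod_range_prod {ι : Type*} [Fintype ι] {f : ℕ → ι → ℝ} {ε : ℕ → ℝ}
    (hε : Summable ε) (hf : ∀ n i, |f n i - 1| ≤ ε n) :
    ∃ L, Tendsto (fun N => ∏ n ∈ Finset.range N, ∏ i, f n i) atTop (𝓝 L) := by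
  have hmul : ∀ i, Multipliable fun n => f n i := fun i => by
    simpa using Real.multipliable_one_add_of_summable (hε.of_norm_bounded fun n => hf n i)
  refine ⟨∏ i, ∏' n, f n i, ?_⟩
  simp_rw [Finset.prod_comm (s := Finset.range _)]
  exact tendsto_finsetProd _ fun i _ => (hmul i).hasProd.tendsto_prod_nat

def gridPoint (a v : Fin m → ℝ) (p : ℤ × (Fin m → ℤ)) : Fin m → ℝ :=
  fun i => p.1 * v i + 2 * a i * p.2 i

def indexSet (J : Finset ℤ) (L : Fin m → ℕ) : Finset (ℤ × (Fin m → ℤ)) :=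
  J ×ˢ Fintype.piFinset fun i => Finset.Icc (-(L i : ℤ)) (L i)

section Grid

variable {a v : Fin m → ℝ} {J : Finset ℤ} {L : Fin m → ℕ} {p q : ℤ × (Fin m → ℤ)}

theorem mem_indexSet : p ∈ indexSet J L ↔ p.1 ∈ J ∧ ∀ i, |p.2 i| ≤ L i := by
  simp only [indexSet, Finset.mem_product, Fintype.mem_piFinset, Finset.mem_Icc, abs_le]

theorem card_indexSet : (indexSet J L).card = J.card * ∏ i, (2 * L i + 1) := by
  rw [indexSet, Finset.card_product, Fintype.card_piFinset]
  congr 1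
  refine Finset.prod_congr rfl fun i _ => ?_
  rw [Int.card_Icc]
  omega

theorem gridPoint_sub_gridPoint (i : Fin m) :
    gridPoint a v p i - gridPoint a v q i =
      ((p.1 - q.1 : ℤ) : ℝ) * v i + 2 * a i * ((p.2 i - q.2 i : ℤ) : ℝ) := by
  simp only [gridPoint]
  push_cast
  ring

theorem exists_two_mul_le_abs_gridPoint_sub {I : Fin m} (ha : ∀ i, 0 < a i)
    (hI : 2 * a I * (2 * L I + 1) ≤ |v I|) (hp : p ∈ indexSet J L) (hq : q ∈ indexSet J L)
    (hpq : p ≠ q) : ∃ i, 2 * a i ≤ |gridPoint a v p i - gridPoint a v q i| := by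
  by_cases hj : p.1 = q.1
  · obtain ⟨i, hi⟩ := Function.ne_iff.1 fun hl => hpq (Prod.ext hj hl)
    refine ⟨i, ?_⟩
    have : (1 : ℝ) ≤ |((p.2 i - q.2 i : ℤ) : ℝ)| := by
      exact_mod_cast Int.one_le_abs (sub_ne_zero.2 hi)
    rw [gridPoint_sub_gridPoint, hj, sub_self, Int.cast_zero, zero_mul, zero_add, abs_mul,
      abs_of_pos (by linarith [ha i])]
    nlinarith [ha i]
  · refine ⟨I, ?_⟩
    rw [mem_indexSet] at hp hq
    have hfar : |v I| ≤ |((p.1 - q.1 : ℤ) : ℝ) * v I| := by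
      rw [abs_mul]
      refine le_mul_of_one_le_left (abs_nonneg _) ?_
      exact_mod_cast Int.one_le_abs (sub_ne_zero.2 hj)
    have hnear : |2 * a I * ((p.2 I - q.2 I : ℤ) : ℝ)| ≤ 2 * a I * (2 * L I) := by
      rw [abs_mul, abs_of_pos (by linarith [ha I])]
      refine mul_le_mul_of_nonneg_left ?_ (by linarith [ha I])
      have := (abs_sub _ _).trans (add_le_add (hp.2 I) (hq.2 I))
      exact_mod_cast (by omega : |p.2 I - q.2 I| ≤ 2 * (L I : ℤ))
    rw [gridPoint_sub_gridPoint]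
    linarith [abs_sub_abs_le_abs_add ((((p.1 - q.1 : ℤ) : ℝ) * v I))
      (2 * a I * ((p.2 I - q.2 I : ℤ) : ℝ))]

theorem injOn_gridPoint {I : Fin m} (ha : ∀ i, 0 < a i)
    (hI : 2 * a I * (2 * L I + 1) ≤ |v I|) : Set.InjOn (gridPoint a v) (indexSet J L) := by
  intro p hp q hq hpq
  by_contra hne
  obtain ⟨i, hi⟩ := exists_two_mul_le_abs_gridPoint_sub ha hI hp hq hne
  rw [hpq, sub_self, abs_zero] at hi
  linarith [ha i]

theorem card_image_gridPoint {I : Fin m} (ha : ∀ i, 0 < a i)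
    (hI : 2 * a I * (2 * L I + 1) ≤ |v I|) :
    ((indexSet J L).image (gridPoint a v)).card = J.card * ∏ i, (2 * L i + 1) := by
  rw [Finset.card_image_of_injOn (injOn_gridPoint ha hI), card_indexSet]

theorem abs_gridPoint_le {N : ℕ} (ha : ∀ i, 0 ≤ a i)
    (hp : p ∈ indexSet (Finset.Icc (-(N : ℤ)) N) L) (i : Fin m) :
    |gridPoint a v p i| ≤ N * |v i| + 2 * a i * L i := by
  rw [mem_indexSet, Finset.mem_Icc] at hp
  have hj : |(p.1 : ℝ)| ≤ N := by exact_mod_cast abs_le.2 hp.1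
  have hl : |(p.2 i : ℝ)| ≤ L i := by exact_mod_cast hp.2 i
  calc |gridPoint a v p i| ≤ |(p.1 : ℝ)| * |v i| + 2 * a i * |(p.2 i : ℝ)| := by
        rw [← abs_of_nonneg (by linarith [ha i] : 0 ≤ 2 * a i), ← abs_mul, ← abs_mul]
        exact abs_add_le (p.1 * v i) (2 * a i * p.2 i)
    _ ≤ N * |v i| + 2 * a i * L i := by
        gcongr
        linarith [ha i]

theorem gridPoint_succ (p : ℤ × (Fin m → ℤ)) :
    gridPoint a v (p.1 + 1, p.2) = gridPoint a v p + v := by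
  ext i
  simp only [gridPoint, Pi.add_apply]
  push_cast
  ring

end Grid

/-- Half-extent of the grid in coordinate `i`, in units of `2 * a i`. In coordinate `I` it is the
largest `L` with `2 * a I * (2 * L + 1) ≤ |v I|`. -/
def fillCount (N : ℕ) (a v : Fin m → ℝ) (I i : Fin m) : ℕ :=
  if i = I then ⌊(|v I| / (2 * a I) - 1) / 2⌋₊ else ⌈N ^ 2 * ‖v‖ / a i⌉₊

/-- The factor of coordinate `i` in `#(stepSet N a v I)`; the progression is counted in
coordinate `I`. -/
def copies (N : ℕ) (a v : Fin m → ℝ) (I i : Fin m) : ℕ :=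
  (2 * fillCount N a v I i + 1) * if i = I then 2 * N + 1 else 1

def nextWidth (N : ℕ) (a v : Fin m → ℝ) (I i : Fin m) : ℝ :=
  a i + N * |v i| + 2 * a i * fillCount N a v I i

def stepSet (N : ℕ) (a v : Fin m → ℝ) (I : Fin m) : Finset (Fin m → ℝ) :=
  (indexSet (Finset.Icc (-(N : ℤ)) N) (fillCount N a v I)).image (gridPoint a v)

structure Admissible (N : ℕ) (a v : Fin m → ℝ) (I : Fin m) : Prop where
  one_le : 1 ≤ N
  pos : ∀ i, 0 < a i
  large : 4 * (N + 1) * a I ≤ |v I|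

namespace Admissible

variable {N : ℕ} {a v : Fin m → ℝ} {I : Fin m}

theorem three_le_abs_div (h : Admissible N a v I) : 3 ≤ |v I| / (2 * a I) := by
  have := h.pos I
  have : (1 : ℝ) ≤ N := by exact_mod_cast h.one_le
  rw [le_div_iff₀ (by positivity)]
  nlinarith [h.large]

theorem two_mul_mul_fillCount_le (h : Admissible N a v I) :
    2 * a I * (2 * fillCount N a v I I + 1) ≤ |v I| := by
  have hx := h.three_le_abs_div
  rw [fillCount, if_pos rfl]
  set x := |v I| / (2 * a I)
  have := h.pos I
  calc 2 * a I * (2 * ⌊(x - 1) / 2⌋₊ + 1) ≤ 2 * a I * x := by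
        gcongr
        linarith [Nat.floor_le (show 0 ≤ (x - 1) / 2 by linarith)]
    _ = |v I| := mul_div_cancel₀ _ (by positivity)

theorem lt_two_mul_mul_fillCount (h : Admissible N a v I) :
    |v I| < 2 * a I * (2 * fillCount N a v I I + 3) := by
  rw [fillCount, if_pos rfl]
  set x := |v I| / (2 * a I)
  have := h.pos I
  calc |v I| = 2 * a I * x := (mul_div_cancel₀ _ (by positivity)).symm
    _ < 2 * a I * (2 * ⌊(x - 1) / 2⌋₊ + 3) := by
        gcongr
        linarith [Nat.lt_floor_add_one ((x - 1) / 2)]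

theorem one_le_fillCount (h : Admissible N a v I) (i : Fin m) : 1 ≤ fillCount N a v I i := by
  rw [fillCount]
  split_ifs
  · exact Nat.le_floor (by push_cast; linarith [h.three_le_abs_div])
  · have hN : (0 : ℝ) < N := by exact_mod_cast h.one_le
    have := h.pos I
    have hv : 0 < ‖v‖ := calc
      0 < 4 * (N + 1) * a I := by positivity
      _ ≤ |v I| := h.large
      _ ≤ ‖v‖ := (Real.norm_eq_abs (v I)) ▸ norm_le_pi_norm v I
    have := h.pos i
    exact Nat.one_le_ceil_iff.2 (by positivity)

theorem pow_two_mul_norm_le (h : Admissible N a v I) (i : Fin m) (hi : i ≠ I) :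
    N ^ 2 * ‖v‖ ≤ a i * fillCount N a v I i := by
  rw [fillCount, if_neg hi, mul_comm, ← div_le_iff₀' (h.pos i)]
  exact Nat.le_ceil _

theorem mul_copies_le_nextWidth (h : Admissible N a v I) (i : Fin m) :
    a i * copies N a v I i ≤ nextWidth N a v I i := by
  have := h.pos i
  rw [copies, nextWidth]
  split_ifs with hi
  · subst hi
    have hv := h.two_mul_mul_fillCount_le
    push_cast
    nlinarith
  · push_cast
    nlinarith [abs_nonneg (v i)]

theorem mul_nextWidth_le (h : Admissible N a v I) (i : Fin m) :
    N * nextWidth N a v I i ≤ (N + 1) * (a i * copies N a v I i) := by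
  have := h.pos i
  rw [copies, nextWidth]
  split_ifs with hi
  · subst hi
    have hlt := h.lt_two_mul_mul_fillCount
    -- `|v i| < 2 a (2 L + 3)` together with `4 (N + 1) a ≤ |v i|` gives `2 N a ≤ a (2 L + 1)`
    have hNL : 2 * N * a i ≤ a i * (2 * fillCount N a v i i + 1) := by
      nlinarith [h.large]
    have hN : (0 : ℝ) ≤ N := N.cast_nonneg
    push_cast
    nlinarith [mul_le_mul_of_nonneg_left hlt.le (mul_nonneg hN hN),
      mul_le_mul_of_nonneg_left hNL hN]
  · have hL := h.pow_two_mul_norm_le i hi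
    have hvi : |v i| ≤ ‖v‖ := (Real.norm_eq_abs (v i)) ▸ norm_le_pi_norm v i
    push_cast
    nlinarith

theorem abs_nextWidth_div_sub_one_le (h : Admissible N a v I) (i : Fin m) :
    |nextWidth N a v I i / (a i * copies N a v I i) - 1| ≤ 1 / N := by
  have hA : 0 < a i * copies N a v I i := by
    have := h.pos i
    have : 0 < copies N a v I i := by unfold copies; positivity
    positivity
  have hN : (0 : ℝ) < N := by exact_mod_cast h.one_le
  rw [abs_of_nonneg (by rw [sub_nonneg, one_le_div hA]; exact h.mul_copies_le_nextWidth i),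
    sub_le_iff_le_add, div_le_iff₀ hA]
  calc nextWidth N a v I i ≤ (N + 1) * (a i * copies N a v I i) / N :=
        (le_div_iff₀ hN).2 (by linarith [h.mul_nextWidth_le i])
    _ = (1 / N + 1) * (a i * copies N a v I i) := by field_simp; ring

theorem three_mul_le_nextWidth (h : Admissible N a v I) (i : Fin m) :
    3 * a i ≤ nextWidth N a v I i := by
  have := h.pos i
  have : (1 : ℝ) ≤ fillCount N a v I i := by exact_mod_cast h.one_le_fillCount i
  rw [nextWidth]
  nlinarith [abs_nonneg (v i)]

theorem card_stepSet (h : Admissible N a v I) :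
    (stepSet N a v I).card = ∏ i, copies N a v I i := by
  rw [stepSet, card_image_gridPoint h.pos h.two_mul_mul_fillCount_le, Int.card_Icc]
  simp only [copies, Finset.prod_mul_distrib, Finset.prod_ite_eq', Finset.mem_univ, if_true]
  rw [mul_comm]
  congr 1
  omega

theorem add_mem_box_nextWidth (h : Admissible N a v I) {c x : Fin m → ℝ}
    (hc : c ∈ stepSet N a v I) (hx : x ∈ box a) : x + c ∈ box (nextWidth N a v I) := by
  obtain ⟨p, hp, rfl⟩ := Finset.mem_image.1 hc
  refine add_mem_box hx fun i => ?_
  have := abs_gridPoint_le (v := v) (fun i => (h.pos i).le) hp i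
  rw [nextWidth]
  linarith

theorem pairwise_disjoint_image_add_box (h : Admissible N a v I) :
    (stepSet N a v I : Set (Fin m → ℝ)).Pairwise fun c c' =>
      Disjoint ((· + c) '' box a) ((· + c') '' box a) := by
  rintro _ hc _ hc' hne
  obtain ⟨p, hp, rfl⟩ := Finset.mem_image.1 hc
  obtain ⟨q, hq, rfl⟩ := Finset.mem_image.1 hc'
  obtain ⟨i, hi⟩ := exists_two_mul_le_abs_gridPoint_sub h.pos h.two_mul_mul_fillCount_le hp hq
    fun hpq => hne (congrArg _ hpq)
  exact disjoint_image_add_box hi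

theorem toReal_volume_ratio (h : Admissible N a v I) :
    (volume (box (nextWidth N a v I))).toReal /
        ((volume (box a)).toReal * ((stepSet N a v I : Set (Fin m → ℝ)).ncard : ℝ)) =
      ∏ i, nextWidth N a v I i / (a i * copies N a v I i) := by
  rw [toReal_volume_box fun i => (by linarith [h.three_mul_le_nextWidth i, h.pos i]),
    toReal_volume_box fun i => (h.pos i).le, Set.ncard_coe_finset, h.card_stepSet, Nat.cast_prod,
    ← Finset.prod_mul_distrib, ← Finset.prod_div_distrib]
  refine Finset.prod_congr rfl fun i _ => ?_
  rw [mul_assoc, mul_div_mul_left _ _ two_ne_zero]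

theorem div_le_ncard_inter_image_sub_div (h : Admissible N a v I) :
    ((2 * N : ℕ) : ℝ) / ((2 * N : ℕ) + 1) ≤
      (((stepSet N a v I : Set (Fin m → ℝ)) ∩
          (fun x => x - v) '' (stepSet N a v I : Set (Fin m → ℝ))).ncard : ℝ) /
        ((stepSet N a v I : Set (Fin m → ℝ)).ncard : ℝ) := by
  set C : Set (Fin m → ℝ) := ↑(stepSet N a v I)
  set P := ∏ i, (2 * fillCount N a v I i + 1)
  have hP : 0 < P := Finset.prod_pos fun i _ => by omega
  have hC : C.ncard = (2 * N + 1) * P := by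
    rw [Set.ncard_coe_finset, stepSet, card_image_gridPoint h.pos h.two_mul_mul_fillCount_le,
      Int.card_Icc]
    congr 1
    omega
  -- the translate by `v` of a point with progression index `j < N` is again in `C`
  have hsub : (((indexSet (Finset.Ico (-(N : ℤ)) N) (fillCount N a v I)).image (gridPoint a v) :
      Finset _) : Set (Fin m → ℝ)) ⊆ C ∩ (fun x => x - v) '' C := by
    intro y hy
    obtain ⟨p, hp, rfl⟩ := Finset.mem_image.1 hy
    rw [mem_indexSet, Finset.mem_Ico] at hp
    refine ⟨Finset.mem_image_of_mem _ ?_, gridPoint a v (p.1 + 1, p.2),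
      Finset.mem_image_of_mem _ ?_, by simp only [gridPoint_succ, add_sub_cancel_right]⟩
    · exact mem_indexSet.2 ⟨Finset.mem_Icc.2 ⟨hp.1.1, hp.1.2.le⟩, hp.2⟩
    · exact mem_indexSet.2 ⟨Finset.mem_Icc.2 ⟨by omega, by omega⟩, hp.2⟩
  have hinter : 2 * N * P ≤ (C ∩ (fun x => x - v) '' C).ncard := by
    calc 2 * N * P = ((indexSet (Finset.Ico (-(N : ℤ)) N) (fillCount N a v I)).image
          (gridPoint a v)).card := by
          rw [card_image_gridPoint h.pos h.two_mul_mul_fillCount_le, Int.card_Ico]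
          congr 1
          omega
      _ ≤ _ := by
          rw [← Set.ncard_coe_finset]
          exact Set.ncard_le_ncard hsub ((Finset.finite_toSet _).inter_of_left _)
  rw [hC, div_le_div_iff₀ (by positivity) (by positivity)]
  have : ((2 * N * P : ℕ) : ℝ) ≤ (C ∩ (fun x => x - v) '' C).ncard := by exact_mod_cast hinter
  push_cast at this ⊢
  nlinarith

theorem one_lt_card_stepSet (h : Admissible N a v I) : 1 < (stepSet N a v I).card := by
  rw [h.card_stepSet]
  calc 1 < copies N a v I I := by
        have := h.one_le
        rw [copies, if_pos rfl]
        nlinarith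
    _ ≤ ∏ i, copies N a v I i :=
        Finset.single_le_prod' (fun i _ => Nat.one_le_iff_ne_zero.2 (by unfold copies; positivity))
          (Finset.mem_univ I)

end Admissible

def maxCoord [Nonempty (Fin m)] (v : Fin m → ℝ) : Fin m := (IsGreatest.pi_norm v).1.choose

theorem abs_maxCoord [Nonempty (Fin m)] (v : Fin m → ℝ) : |v (maxCoord v)| = ‖v‖ :=
  (Real.norm_eq_abs _).symm.trans (IsGreatest.pi_norm v).1.choose_spec

theorem admissible_maxCoord [Nonempty (Fin m)] {N : ℕ} {a v : Fin m → ℝ} (hN : 1 ≤ N)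
    (ha : ∀ i, 0 < a i) (hv : 4 * (N + 1) * ‖a‖ ≤ ‖v‖) : Admissible N a v (maxCoord v) where
  one_le := hN
  pos := ha
  large := by
    rw [abs_maxCoord]
    refine le_trans ?_ hv
    have := norm_le_pi_norm a (maxCoord v)
    rw [Real.norm_eq_abs, abs_of_pos (ha _)] at this
    gcongr

section Construction

variable {g : ℕ → Fin m → ℝ} (hg : Tendsto (fun k => ‖g k‖) atTop atTop)

def farIndex (p : ℕ) (M : ℝ) : ℕ :=
  ((eventually_gt_atTop p).and (hg.eventually_ge_atTop M)).exists.choose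

theorem farIndex_spec (p : ℕ) (M : ℝ) : p < farIndex hg p M ∧ M ≤ ‖g (farIndex hg p M)‖ :=
  ((eventually_gt_atTop p).and (hg.eventually_ge_atTop M)).exists.choose_spec

def threshold (n : ℕ) (a : Fin m → ℝ) : ℝ := 4 * (2 ^ n + 1) * ‖a‖

variable [Nonempty (Fin m)]

/-- The pair `(k n, a n)`; `k (n + 1)` is chosen only after `a (n + 1)` is known. -/
def stage : ℕ → ℕ × (Fin m → ℝ)
  | 0 => (farIndex hg 0 (threshold 0 (1 : Fin m → ℝ)), 1)
  | n + 1 =>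
    let k := (stage n).1
    let a := nextWidth (2 ^ n) (stage n).2 (g k) (maxCoord (g k))
    (farIndex hg k (threshold (n + 1) a), a)

def index (n : ℕ) : ℕ := (stage hg n).1

def width (n : ℕ) : Fin m → ℝ := (stage hg n).2

def stageSet (n : ℕ) : Finset (Fin m → ℝ) :=
  stepSet (2 ^ n) (width hg n) (g (index hg n)) (maxCoord (g (index hg n)))

theorem width_succ (n : ℕ) :
    width hg (n + 1) =
      nextWidth (2 ^ n) (width hg n) (g (index hg n)) (maxCoord (g (index hg n))) := rfl

theorem strictMono_index : StrictMono (index hg) :=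
  strictMono_nat_of_lt_succ fun _ => (farIndex_spec hg _ _).1

theorem threshold_le_norm (n : ℕ) : threshold n (width hg n) ≤ ‖g (index hg n)‖ := by
  cases n <;> exact (farIndex_spec hg _ _).2

theorem admissible_of_pos (n : ℕ) (hpos : ∀ i, 0 < width hg n i) :
    Admissible (2 ^ n) (width hg n) (g (index hg n)) (maxCoord (g (index hg n))) := by
  refine admissible_maxCoord Nat.one_le_two_pow hpos ?_
  have := threshold_le_norm hg n
  rw [threshold] at this
  exact_mod_cast this

theorem width_pos : ∀ n i, 0 < width hg n i
  | 0 => fun _ => one_pos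
  | n + 1 => fun i => by
    have h := admissible_of_pos hg n (width_pos n)
    rw [width_succ]
    linarith [h.three_mul_le_nextWidth i, h.pos i]

theorem admissible (n : ℕ) :
    Admissible (2 ^ n) (width hg n) (g (index hg n)) (maxCoord (g (index hg n))) :=
  admissible_of_pos hg n (width_pos hg n)

theorem tendsto_width (i : Fin m) : Tendsto (fun n => width hg n i) atTop atTop := by
  have h3 : ∀ n, (3 : ℝ) ^ n ≤ width hg n i := by
    intro n
    induction n with
    | zero => exact le_rfl
    | succ n ih =>
      rw [width_succ, pow_succ]
      linarith [(admissible hg n).three_mul_le_nextWidth i]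
  exact tendsto_atTop_mono h3 (tendsto_pow_atTop_atTop_of_one_lt (by norm_num))

theorem exists_tendsto_prod_volume_ratio : ∃ L, Tendsto (fun N => ∏ n ∈ Finset.range N,
    (volume (box (width hg (n + 1)))).toReal /
      ((volume (box (width hg n))).toReal * ((stageSet hg n : Set (Fin m → ℝ)).ncard : ℝ)))
    atTop (𝓝 L) := by
  refine (exists_tendsto_prod_range_prod summable_geometric_two fun n i =>
    ?_).imp fun L hL => hL.congr fun N => Finset.prod_congr rfl fun n _ =>
      ((admissible hg n).toReal_volume_ratio).symm
  have := (admissible hg n).abs_nextWidth_div_sub_one_le i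
  rwa [Nat.cast_pow, Nat.cast_two, ← one_div_pow] at this

theorem tendsto_ncard_inter_image_sub_div : Tendsto (fun n =>
    (((stageSet hg n : Set (Fin m → ℝ)) ∩
        (fun x => x - g (index hg n)) '' (stageSet hg n : Set (Fin m → ℝ))).ncard : ℝ) /
      ((stageSet hg n : Set (Fin m → ℝ)).ncard : ℝ)) atTop (𝓝 1) := by
  have hN : Tendsto (fun n : ℕ => 2 * 2 ^ n) atTop atTop :=
    tendsto_atTop_mono (fun n => by have := n.lt_two_pow_self; simp only [id]; omega) tendsto_id
  refine tendsto_of_tendsto_of_tendsto_of_le_of_le ((tendsto_natCast_div_add_atTop 1).comp hN)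
    tendsto_const_nhds (fun n => (admissible hg n).div_le_ncard_inter_image_sub_div) fun n => ?_
  have := Set.ncard_le_ncard (Set.inter_subset_left (t := (fun x => x - g (index hg n)) ''
    (stageSet hg n : Set (Fin m → ℝ)))) (Finset.finite_toSet (stageSet hg n))
  exact div_le_one_of_le₀ (Nat.cast_le.2 this) (Nat.cast_nonneg _)

end Construction

end RigidCF

end

/-- The key combinatorial claim in the construction of a rigid `(C,F)`-action of `ℝ^m`:
given a sequence `g_k → ∞` in `ℝ^m`, there are a subsequence `(g_{k n})`, finite sets
`C n` with more than one element, and open boxes `F n` determined by `a n` with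
`a n i → ∞`, such that `F n + C n ⊆ F (n+1)`, the translates of `F n` by elements
of `C n` are pairwise disjoint, the infinite product
`∏ λ(F (n+1)) / (λ(F n) · #(C n))` converges to a finite value, and
`#(C n ∩ (C n - g_{k n})) / #(C n) → 1`. -/
theorem stmt3 (m : ℕ) (hm : 1 ≤ m) (g : ℕ → (Fin m → ℝ))
    (hg : Tendsto (fun k => ‖g k‖) atTop atTop) :
    ∃ k : ℕ → ℕ, StrictMono k ∧
      ∃ (C : ℕ → Set (Fin m → ℝ)) (a : ℕ → Fin m → ℝ) (F : ℕ → Set (Fin m → ℝ)),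
        (∀ n, F n = Set.pi Set.univ fun i => Set.Ioo (-(a n i)) (a n i)) ∧
        (∀ n i, 0 < a n i) ∧
        (∀ i, Tendsto (fun n => a n i) atTop atTop) ∧
        (∀ n, (C n).Finite) ∧
        (∀ n, 1 < (C n).ncard) ∧
        (∀ n, ∀ c ∈ C n, ∀ x ∈ F n, x + c ∈ F (n + 1)) ∧
        (∀ n, (C n).Pairwise fun c c' =>
          Disjoint ((· + c) '' F n) ((· + c') '' F n)) ∧
        (∃ L : ℝ, Tendsto (fun N => ∏ n ∈ Finset.range N,
            (volume (F (n + 1))).toReal / ((volume (F n)).toReal * (C n).ncard))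
          atTop (𝓝 L)) ∧
        Tendsto (fun n =>
            ((C n ∩ (fun x => x - g (k n)) '' C n).ncard : ℝ) / ((C n).ncard : ℝ))
          atTop (𝓝 1) := by
  have : Nonempty (Fin m) := Fin.pos_iff_nonempty.1 hm
  have h := RigidCF.admissible hg
  refine ⟨RigidCF.index hg, RigidCF.strictMono_index hg, fun n => RigidCF.stageSet hg n,
    RigidCF.width hg, fun n => RigidCF.box (RigidCF.width hg n), fun n => rfl,
    RigidCF.width_pos hg, RigidCF.tendsto_width hg, fun n => Finset.finite_toSet _,
    fun n => ?_, fun n _ hc _ hx => (h n).add_mem_box_nextWidth hc hx,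
    fun n => (h n).pairwise_disjoint_image_add_box, RigidCF.exists_tendsto_prod_volume_ratio hg,
    RigidCF.tendsto_ncard_inter_image_sub_div hg⟩
  rw [Set.ncard_coe_finset]
  exact (h n).one_lt_card_stepSet
end

section
/- Let G be a countable torsion-free abelian group that is nontrivial and not isomorphic to ℤ. Then there exists an injective group homomorphism φ : G → (ℝ, +) whose image φ(G) is dense in ℝ. -/
/-!
Tensoring with `ℚ` embeds the torsion-free group `G` into its divisible hull, a countable
`ℚ`-vector space. Its dimension is at most `ℵ₀ < 𝔠 = dim_ℚ ℝ`, so it embeds `ℚ`-linearly into `ℝ`.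
A subgroup of `ℝ` is either dense or cyclic, and a nontrivial torsion-free cyclic group is `≅ ℤ`.
-/

open Cardinal

instance LocalizedModule.countable {R M : Type*} [CommSemiring R] (S : Submonoid R)
    [AddCommMonoid M] [Module R M] [Countable R] [Countable M] :
    Countable (LocalizedModule S M) :=
  inferInstanceAs (Countable (Quotient _))

theorem exists_injective_linearMap_rat_real (V : Type*) [AddCommGroup V] [Module ℚ V]
    [Countable V] : ∃ f : V →ₗ[ℚ] ℝ, Function.Injective f := by
  refine lift_rank_le_iff_exists_linearMap.mp ?_
  calc lift.{0} (Module.rank ℚ V) ≤ lift.{0} #V := lift_le.mpr (rank_le_card ℚ V)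
    _ ≤ ℵ₀ := by simp [mk_le_aleph0]
    _ ≤ 𝔠 := aleph0_le_continuum
    _ = lift (Module.rank ℚ ℝ) := by rw [Real.rank_rat_real, lift_continuum]

theorem exists_injective_addMonoidHom_real (G : Type*) [AddCommGroup G] [IsAddTorsionFree G]
    [Countable G] : ∃ φ : G →+ ℝ, Function.Injective φ := by
  obtain ⟨f, hf⟩ := exists_injective_linearMap_rat_real (DivisibleHull G)
  exact ⟨f.toAddMonoidHom.comp (DivisibleHull.coeAddMonoidHom G),
    hf.comp DivisibleHull.coe_injective⟩

theorem nonempty_addEquiv_int_of_isAddCyclic (A : Type*) [AddGroup A] [IsAddCyclic A]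
    [IsAddTorsionFree A] [Nontrivial A] : Nonempty (A ≃+ ℤ) := by
  obtain ⟨g, hg⟩ := IsAddCyclic.exists_generator (α := A)
  have hg0 : g ≠ 0 := by
    obtain ⟨a, ha⟩ := exists_ne (0 : A)
    obtain ⟨k, rfl⟩ := hg a
    rintro rfl
    exact ha (zsmul_zero k)
  have hinf : (AddSubgroup.zmultiples g : Set A).Infinite :=
    infinite_zmultiples.mpr (not_isOfFinAddOrder_of_isAddTorsionFree hg0)
  have : Infinite A := Set.infinite_univ_iff.mp (hinf.mono (Set.subset_univ _))
  exact ⟨(intEquivOfZMultiplesEqTop g (eq_top_iff.mpr fun a _ => hg a)).symm⟩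

theorem AddMonoidHom.dense_range_of_injective {G H : Type*} [AddGroup G] [AddCommGroup H]
    [LinearOrder H] [IsOrderedAddMonoid H] [Archimedean H] [TopologicalSpace H] [OrderTopology H]
    (φ : G →+ H) (hφ : Function.Injective φ) (hG : ¬IsAddCyclic G) : Dense (Set.range φ) := by
  rcases φ.range.dense_or_cyclic with hdense | ⟨a, ha⟩
  · simpa using hdense
  · rw [← AddSubgroup.zmultiples_eq_closure] at ha
    have : IsAddCyclic φ.range := ha ▸ AddSubgroup.isAddCyclic_zmultiples a
    exact absurd (isAddCyclic_of_injective φ.rangeRestrict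
      (AddMonoidHom.rangeRestrict_injective_iff.mpr hφ)) hG

/-- A countable torsion-free abelian group which is nontrivial and not isomorphic to `ℤ`
admits an injective group homomorphism into `(ℝ, +)` with dense range. -/
theorem stmt9 {G : Type*} [AddCommGroup G] [Countable G] [Nontrivial G]
    (htf : ∀ g : G, g ≠ 0 → ∀ n : ℕ, 1 ≤ n → n • g ≠ 0)
    (hZ : IsEmpty (G ≃+ ℤ)) :
    ∃ φ : G →+ ℝ, Function.Injective φ ∧ Dense (Set.range φ) := by
  have : IsAddTorsionFree G := IsAddTorsionFree.of_not_isOfFinAddOrder fun g hg hfin =>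
    let ⟨n, hn, hng⟩ := isOfFinAddOrder_iff_nsmul_eq_zero.mp hfin
    htf g hg n hn hng
  obtain ⟨φ, hφ⟩ := exists_injective_addMonoidHom_real G
  refine ⟨φ, hφ, φ.dense_range_of_injective hφ fun hcyclic => ?_⟩
  exact hZ.false (nonempty_addEquiv_int_of_isAddCyclic G).some
end

section
/- Let G be a countably infinite additive abelian group, d ∈ G, and let (g_k)_{k∈ℕ} be a sequence in G satisfying one of the following: (i) there is g₀ ∈ G of infinite additive order such that every g_k lies in the cyclic subgroup ⟨g₀⟩ and the g_k leave every finite subset of G (each finite F ⊆ G contains g_k for only finitely many k); or (ii) every g_k has finite additive order and, for each N ∈ ℕ, the set {k : addOrderOf(g_k) ≤ N} is finite. Then for every finite subset F ⊆ G, every ε > 0 and every K ∈ ℕ, there exist k ≥ K and a finite subset C ⊆ G with #C > 1 such that the translates c + F, c ∈ C, are pairwise disjoint and #(C ∩ (C − (g_k − d))) ≥ (1 − ε) · #C. -/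
lemma exists_ge_notMem (S : Set ℕ) (hS : S.Finite) (K : ℕ) : ∃ k, K ≤ k ∧ k ∉ S := by
  obtain ⟨m, hm⟩ := hS.bddAbove
  refine ⟨max K (m+1), le_max_left _ _, fun hk => ?_⟩
  have h1 := hm hk
  have h2 := le_max_right K (m+1)
  omega

lemma main_lemma {G : Type*} [AddCommGroup G] (F : Set G) (ε : ℝ) (h : G) (L : ℕ)
    (hL2 : 2 ≤ L) (hεL : 1 ≤ ε * L) (hε : 0 < ε) (hh : h ≠ 0)
    (hav : ∀ j : ℕ, 1 ≤ j → j < L → (∃ a ∈ F, ∃ b ∈ F, j • h = a - b) → j • h = 0) :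
    ∃ C : Set G, C.Finite ∧ 1 < C.ncard ∧
      (C.Pairwise fun c c' => Disjoint ((c + ·) '' F) ((c' + ·) '' F)) ∧
      (1 - ε) * (C.ncard : ℝ) ≤ ((C ∩ (fun x => x - h) '' C).ncard : ℝ) := by
  set C : Set G := (fun j : ℕ => j • h) '' ↑(Finset.range L) with hC
  have hCfin : C.Finite := ((Finset.range L).finite_toSet).image _
  have h0C : (0 : G) ∈ C := ⟨0, by simp; omega, by simp⟩
  have h1C : h ∈ C := ⟨1, by simp; omega, by simp⟩
  have hcard : 1 < C.ncard := by
    rw [Set.one_lt_ncard hCfin]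
    exact ⟨0, h0C, h, h1C, (Ne.symm hh)⟩
  -- pairwise disjoint translates
  have hdisj : C.Pairwise fun c c' => Disjoint ((c + ·) '' F) ((c' + ·) '' F) := by
    have key : ∀ i i' : ℕ, i' < i → i < L → (i : ℕ) • h ≠ i' • h →
        ∀ f ∈ F, ∀ f' ∈ F, (i : ℕ) • h + f ≠ i' • h + f' := by
      intro i i' hlt hiL hne f hf f' hf' heq
      have hsub : (i - i') • h = f' - f := by
        rw [sub_nsmul h hlt.le, ← sub_eq_add_neg, sub_eq_sub_iff_add_eq_add, heq, add_comm]
      have hz := hav (i - i') (by omega) (by omega) ⟨f', hf', f, hf, hsub⟩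
      rw [hz] at hsub
      have : f = f' := by
        have := hsub.symm
        rw [sub_eq_zero] at this
        exact this.symm
      rw [this] at heq
      exact hne (by exact add_right_cancel heq)
    intro c hc c' hc' hne
    obtain ⟨i, hi, rfl⟩ := hc
    obtain ⟨i', hi', rfl⟩ := hc'
    simp only [Finset.coe_range, Set.mem_Iio] at hi hi'
    rw [Set.disjoint_left]
    rintro x ⟨f, hf, rfl⟩ ⟨f', hf', heq⟩
    rcases lt_trichotomy i i' with hlt | heqi | hlt
    · exact key i' i hlt hi' (Ne.symm hne) f' hf' f hf heq
    · exact hne (by rw [heqi])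
    · exact key i i' hlt hi hne f hf f' hf' heq.symm
  set C' : Set G := (fun j : ℕ => j • h) '' ↑(Finset.range (L - 1)) with hC'
  have hC'memC : ∀ x ∈ C', x ∈ C ∩ (fun x => x - h) '' C := by
    rintro x ⟨j, hj, rfl⟩
    simp only [Finset.coe_range, Set.mem_Iio] at hj
    constructor
    · exact ⟨j, by simp; omega, rfl⟩
    · refine ⟨(j+1) • h, ⟨j+1, by simp; omega, rfl⟩, ?_⟩
      simp only
      rw [succ_nsmul, add_sub_cancel_right]
  refine ⟨C, hCfin, hcard, hdisj, ?_⟩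
  by_cases hcase : (L - 1) • h ∈ C'
  · -- wrap-around case : C = C'
    have hCC' : C ⊆ C' := by
      rintro x ⟨j, hj, rfl⟩
      simp only [Finset.coe_range, Set.mem_Iio] at hj
      by_cases hj' : j < L - 1
      · exact ⟨j, by simp [hj'], rfl⟩
      · have : j = L - 1 := by omega
        rw [this]; exact hcase
    have hsub : C ⊆ C ∩ (fun x => x - h) '' C := fun x hx => hC'memC x (hCC' hx)
    have heq : C ∩ (fun x => x - h) '' C = C := le_antisymm Set.inter_subset_left hsub
    rw [heq]
    have : (0:ℝ) ≤ (C.ncard : ℝ) := Nat.cast_nonneg _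
    nlinarith
  · -- injective case
    have hinj : Set.InjOn (fun j : ℕ => j • h) ↑(Finset.range L) := by
      have key : ∀ i i' : ℕ, i' < i → i < L → (i:ℕ) • h = i' • h → False := by
        intro i i' hlt hiL heq
        have hz : (i - i') • h = 0 := by
          rw [sub_nsmul h hlt.le, heq]; simp
        have hdvd : addOrderOf h ∣ (i - i') := addOrderOf_dvd_iff_nsmul_eq_zero.2 hz
        set n := addOrderOf h with hn
        have hnpos : 0 < n := by
          rcases Nat.eq_zero_or_pos n with h0 | h0
          · rw [h0] at hdvd
            have := Nat.eq_zero_of_zero_dvd hdvd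
            omega
          · exact h0
        have hnle : n ≤ L - 1 := le_trans (Nat.le_of_dvd (by omega) hdvd) (by omega)
        -- (L-1) • h = ((L-1) % n) • h ∈ C'
        apply hcase
        have hmod : (L - 1) • h = ((L - 1) % n) • h :=
          (hn ▸ mod_addOrderOf_nsmul h (L - 1)).symm
        have hrlt : (L - 1) % n < n := Nat.mod_lt _ hnpos
        rw [hmod]
        exact ⟨(L - 1) % n, by simp; omega, rfl⟩
      intro i hi i' hi' heq
      simp only [Finset.coe_range, Set.mem_Iio] at hi hi'
      by_contra hne
      rcases lt_trichotomy i i' with hlt | he | hlt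
      · exact key i' i hlt hi' heq.symm
      · exact hne he
      · exact key i i' hlt hi heq
    have hCcard : C.ncard = L := by
      rw [hC, Set.ncard_image_of_injOn hinj, Set.ncard_coe_finset, Finset.card_range]
    have hC'card : C'.ncard = L - 1 := by
      have hinj' : Set.InjOn (fun j : ℕ => j • h) ↑(Finset.range (L-1)) := by
        apply hinj.mono
        intro x hx
        simp only [Finset.coe_range, Set.mem_Iio] at hx ⊢
        omega
      rw [hC', Set.ncard_image_of_injOn hinj', Set.ncard_coe_finset, Finset.card_range]
    have hle : L - 1 ≤ (C ∩ (fun x => x - h) '' C).ncard := by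
      rw [← hC'card]
      exact Set.ncard_le_ncard hC'memC (hCfin.subset Set.inter_subset_left)
    have hle' : ((L:ℝ) - 1) ≤ ((C ∩ (fun x => x - h) '' C).ncard : ℝ) := by
      have : ((L - 1 : ℕ) : ℝ) = (L:ℝ) - 1 := by
        rw [Nat.cast_sub (by omega)]; simp
      rw [← this]
      exact_mod_cast hle
    rw [hCcard]
    nlinarith

/-- The core combinatorial claim of Lemma 4.2 (cases (i) and (ii) of a 'good' sequence):
given `d ∈ G` and a sequence `(g k)` which either lies in an infinite cyclic subgroup
and leaves every finite set, or consists of elements of finite, unbounded orders, one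
can find, for every finite `F`, `ε > 0` and `K`, an index `k ≥ K` and a finite set `C`
with more than one element whose translates of `F` are pairwise disjoint and with
`#(C ∩ (C - (g k - d))) ≥ (1 - ε) #C`. -/
theorem stmt11 {G : Type*} [AddCommGroup G] [Countable G] [Infinite G]
    (d : G) (g : ℕ → G)
    (hcase :
      (∃ g0 : G, ¬ IsOfFinAddOrder g0 ∧ (∀ k, g k ∈ AddSubgroup.zmultiples g0) ∧
        ∀ F : Set G, F.Finite → {k : ℕ | g k ∈ F}.Finite) ∨
      ((∀ k, IsOfFinAddOrder (g k)) ∧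
        ∀ N : ℕ, {k : ℕ | addOrderOf (g k) ≤ N}.Finite)) :
    ∀ F : Set G, F.Finite → ∀ ε : ℝ, 0 < ε → ∀ K : ℕ,
      ∃ k, K ≤ k ∧
        ∃ C : Set G, C.Finite ∧ 1 < C.ncard ∧
          (C.Pairwise fun c c' => Disjoint ((c + ·) '' F) ((c' + ·) '' F)) ∧
          (1 - ε) * (C.ncard : ℝ) ≤
            ((C ∩ (fun x => x - (g k - d)) '' C).ncard : ℝ) := by
  intro F hF ε hε K
  set L : ℕ := max 2 (⌈ε⁻¹⌉₊ + 1) with hL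
  have hL2 : 2 ≤ L := le_max_left _ _
  have hεL : 1 ≤ ε * L := by
    have h1 : (ε⁻¹ : ℝ) ≤ (⌈ε⁻¹⌉₊ : ℝ) := Nat.le_ceil _
    have h2 : ((⌈ε⁻¹⌉₊ + 1 : ℕ) : ℝ) ≤ (L : ℝ) := by
      exact_mod_cast le_max_right 2 (⌈ε⁻¹⌉₊ + 1)
    have h3 : (ε⁻¹ : ℝ) ≤ (L : ℝ) := by
      push_cast at h2; linarith
    calc (1 : ℝ) = ε * ε⁻¹ := (mul_inv_cancel₀ hε.ne').symm
      _ ≤ ε * L := by apply mul_le_mul_of_nonneg_left h3 hε.le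
  set D : Set G := {x : G | (∃ a ∈ F, ∃ b ∈ F, x = a - b) ∧ x ≠ 0} with hDdef
  have hD : D.Finite := by
    apply ((hF.prod hF).image (fun p : G × G => p.1 - p.2)).subset
    rintro x ⟨⟨a, ha, b, hb, rfl⟩, -⟩
    exact ⟨(a, b), ⟨ha, hb⟩, rfl⟩
  rcases hcase with ⟨g0, hg0, hmem, hleave⟩ | ⟨htor, hord⟩
  · -- case (i)
    set Z : Set G := (AddSubgroup.zmultiples g0 : Set G) with hZ
    have hinjZ : ∀ j : ℕ, 1 ≤ j → Set.InjOn (fun x => j • (x - d)) Z := by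
      intro j hj x hx y hy hxy
      simp only at hxy
      have hsub : j • (x - y) = 0 := by
        have : j • (x - d) - j • (y - d) = j • (x - y) := by
          rw [← nsmul_sub]; congr 1; abel
        rw [← this, hxy, sub_self]
      obtain ⟨m, hm⟩ := AddSubgroup.mem_zmultiples_iff.mp
        (AddSubgroup.sub_mem _ (hx : x ∈ AddSubgroup.zmultiples g0) hy)
      rw [← hm, ← natCast_zsmul, ← mul_zsmul] at hsub
      have hm0 : (j : ℤ) * m = 0 := by
        by_contra hne
        exact hg0 (isOfFinAddOrder_iff_zsmul_eq_zero.mpr ⟨_, hne, hsub⟩)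
      have hj' : (j : ℤ) ≠ 0 := by exact_mod_cast (by omega : j ≠ 0)
      have hmz : m = 0 := (mul_eq_zero.mp hm0).resolve_left hj'
      have hxy0 : x - y = 0 := by rw [← hm, hmz, zero_zsmul]
      exact sub_eq_zero.mp hxy0
    set B : Set G := {d} ∪ ⋃ j ∈ Set.Ico 1 L, ({x : G | j • (x - d) ∈ D} ∩ Z) with hB
    have hBfin : B.Finite := by
      apply Set.Finite.union (Set.finite_singleton d)
      apply Set.Finite.biUnion (Set.finite_Ico 1 L)
      intro j hj
      have hinj : Set.InjOn (fun x => j • (x - d)) ({x : G | j • (x - d) ∈ D} ∩ Z) :=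
        (hinjZ j hj.1).mono Set.inter_subset_right
      apply Set.Finite.of_finite_image _ hinj
      apply hD.subset
      rintro x ⟨y, ⟨hy1, -⟩, rfl⟩
      exact hy1
    obtain ⟨k, hKk, hk⟩ := exists_ge_notMem _ (hleave B hBfin) K
    refine ⟨k, hKk, ?_⟩
    have hgk : g k ∉ B := hk
    have hh : g k - d ≠ 0 := by
      intro h0
      exact hgk (Or.inl (by simpa [sub_eq_zero] using h0))
    apply main_lemma F ε (g k - d) L hL2 hεL hε hh
    intro j h1j hjL hex
    by_contra hz
    apply hgk
    refine Or.inr (Set.mem_biUnion (⟨h1j, hjL⟩ : j ∈ Set.Ico 1 L) ⟨⟨hex, hz⟩, hmem k⟩)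
  · -- case (ii)
    classical
    set M : ℕ := ((Finset.Ico 1 L) ×ˢ hD.toFinset).sup
      (fun p => addOrderOf ((p.1 : ℕ) • d + p.2)) with hM
    set N : ℕ := max (addOrderOf d) (L * (M + 1)) with hN
    obtain ⟨k, hKk, hk⟩ := exists_ge_notMem _ (hord N) K
    have hn : N < addOrderOf (g k) := by
      by_contra hle
      exact hk (by simpa using not_lt.mp hle)
    refine ⟨k, hKk, ?_⟩
    have hh : g k - d ≠ 0 := by
      intro h0
      have : g k = d := sub_eq_zero.mp h0
      have h1 : addOrderOf (g k) ≤ N := this ▸ le_max_left _ _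
      omega
    apply main_lemma F ε (g k - d) L hL2 hεL hε hh
    intro j h1j hjL hex
    by_contra hz
    set e : G := j • (g k - d) with he
    have heD : e ∈ D := ⟨hex, hz⟩
    have hjgk : j • g k = j • d + e := by
      rw [he, nsmul_sub]; abel
    set m : ℕ := addOrderOf (j • g k) with hm
    have hm1 : m ≤ M := by
      rw [hm, hjgk]
      exact Finset.le_sup (f := fun p : ℕ × G => addOrderOf (p.1 • d + p.2)) (b := (j, e))
        (Finset.mem_product.mpr ⟨Finset.mem_Ico.mpr ⟨h1j, hjL⟩, hD.mem_toFinset.mpr heD⟩)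
    have hmpos : 0 < m := ((htor k).nsmul).addOrderOf_pos
    have hdvd : addOrderOf (g k) ∣ j * m := by
      rw [addOrderOf_dvd_iff_nsmul_eq_zero, mul_nsmul]
      exact addOrderOf_nsmul_eq_zero _
    have h1 : addOrderOf (g k) ≤ j * m := Nat.le_of_dvd (by positivity) hdvd
    have h2 : j * m ≤ L * M := Nat.mul_le_mul hjL.le hm1
    have h4 : L * M + L ≤ N := by
      rw [← Nat.mul_succ]; exact le_max_right _ _
    have h5 : L * M < L * M + L := Nat.lt_add_of_pos_right (by omega)
    have : addOrderOf (g k) < addOrderOf (g k) :=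
      lt_of_le_of_lt (h1.trans h2) (lt_of_lt_of_le h5 (h4.trans hn.le))
    exact lt_irrefl _ this
end

section
/- Let G be a countably infinite additive abelian group and (g_k)_{k∈ℕ} a sequence in G such that the additive orders of the g_k are finite and bounded above, the family of cyclic subgroups (⟨g_k⟩)_{k∈ℕ} is independent, and the g_k leave every finite subset of G (each finite F ⊆ G contains g_k for only finitely many k). Then for every finite subset F ⊆ G, every ε > 0 and every K ∈ ℕ, there exist k ≥ K and a finite subset C ⊆ G with #C > 1 such that the translates c + F, c ∈ C, are pairwise disjoint and #(C ∩ (C − g_k)) ≥ (1 − ε) · #C. -/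
/-!
Take `C = ⟨g k⟩` itself. A subgroup is invariant under translation by its own elements, so
`C ∩ (C - g k) = C`, and `C` has `addOrderOf (g k) > 1` elements once `g k ≠ 0`. Two translates
`c + F`, `c' + F` with `c, c' ∈ C` meet only if `c - c'` is a nonzero element of `F - F`; each
nonzero element lies in at most one of the pairwise disjoint subgroups `⟨g k⟩`, so the finitely
many elements of `F - F` rule out only finitely many `k`.
-/

open Filter Function
open scoped Pointwise

namespace AddSubgroup

variable {G : Type*} [AddCommGroup G]

theorem ncard_zmultiples (a : G) : (zmultiples a : Set G).ncard = addOrderOf a := by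
  rw [← Nat.card_coe_set_eq]
  exact Nat.card_zmultiples a

theorem one_lt_ncard_zmultiples {a : G} (ha : IsOfFinAddOrder a) (ha0 : a ≠ 0) :
    1 < (zmultiples a : Set G).ncard := by
  rw [ncard_zmultiples]
  have hne : addOrderOf a ≠ 1 := mt AddMonoid.addOrderOf_eq_one_iff.mp ha0
  have hpos := ha.addOrderOf_pos
  omega

theorem image_sub_of_mem (H : AddSubgroup G) {a : G} (ha : a ∈ H) :
    (fun x => x - a) '' (H : Set G) = H := by
  ext x
  constructor
  · rintro ⟨y, hy, rfl⟩
    exact sub_mem hy ha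
  · intro hx
    exact ⟨x + a, add_mem hx ha, add_sub_cancel_right x a⟩

theorem pairwise_disjoint_image_add_of_forall_sub_mem (H : AddSubgroup G) {F : Set G}
    (hF : ∀ d ∈ F - F, d ∈ H → d = 0) :
    (H : Set G).Pairwise fun c c' => Disjoint ((c + ·) '' F) ((c' + ·) '' F) := by
  intro c hc c' hc' hne
  rw [Set.disjoint_left]
  rintro _ ⟨f, hf, rfl⟩ ⟨f', hf', heq⟩
  have hdiff : f' - f = c - c' := by
    rw [sub_eq_sub_iff_add_eq_add, add_comm f' c']
    exact heq
  exact hne (sub_eq_zero.mp (hF (c - c') ⟨f', hf', f, hf, hdiff⟩ (sub_mem hc hc')))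

theorem subsingleton_setOf_mem_of_pairwise_disjoint {ι : Type*} {H : ι → AddSubgroup G}
    (hH : Pairwise (Disjoint on H)) {d : G} (hd : d ≠ 0) : {i | d ∈ H i}.Subsingleton :=
  fun _ hi _ hj => by_contra fun hne => hd (disjoint_def.mp (hH hne) hi hj)

theorem eventually_forall_mem_eq_zero_of_pairwise_disjoint {H : ℕ → AddSubgroup G}
    (hH : Pairwise (Disjoint on H)) {D : Set G} (hD : D.Finite) :
    ∀ᶠ k in atTop, ∀ d ∈ D, d ∈ H k → d = 0 := by
  have hbad : (⋃ d ∈ D \ {0}, {k | d ∈ H k}).Finite :=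
    hD.sdiff.biUnion fun d hd => (subsingleton_setOf_mem_of_pairwise_disjoint hH hd.2).finite
  rw [← Nat.cofinite_eq_atTop, eventually_cofinite]
  refine hbad.subset fun k hk => ?_
  push Not at hk
  obtain ⟨d, hd, hdk, hd0⟩ := hk
  exact Set.mem_biUnion ⟨hd, hd0⟩ hdk

end AddSubgroup

theorem stmt14_general {G : Type*} [AddCommGroup G]
    (g : ℕ → G)
    (h1 : ∀ k, IsOfFinAddOrder (g k))
    (hind : iSupIndep fun k : ℕ => AddSubgroup.zmultiples (g k))
    (hesc : ∀ F : Set G, F.Finite → {k : ℕ | g k ∈ F}.Finite) :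
    ∀ F : Set G, F.Finite → ∀ ε : ℝ, 0 < ε → ∀ K : ℕ,
      ∃ k, K ≤ k ∧
        ∃ C : Set G, C.Finite ∧ 1 < C.ncard ∧
          (C.Pairwise fun c c' => Disjoint ((c + ·) '' F) ((c' + ·) '' F)) ∧
          (1 - ε) * (C.ncard : ℝ) ≤
            ((C ∩ (fun x => x - g k) '' C).ncard : ℝ) := by
  intro F hF ε hε K
  have hne : ∀ᶠ k in atTop, g k ≠ 0 := by
    simpa [← Nat.cofinite_eq_atTop] using hesc {0} (Set.finite_singleton 0)
  have hsep : ∀ᶠ k in atTop, ∀ d ∈ F - F, d ∈ AddSubgroup.zmultiples (g k) → d = 0 :=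
    AddSubgroup.eventually_forall_mem_eq_zero_of_pairwise_disjoint
      hind.pairwiseDisjoint (hF.sub hF)
  obtain ⟨k, hkK, hk0, hkF⟩ := ((eventually_ge_atTop K).and (hne.and hsep)).exists
  refine ⟨k, hkK, _, finite_zmultiples.mpr (h1 k), AddSubgroup.one_lt_ncard_zmultiples (h1 k) hk0,
    AddSubgroup.pairwise_disjoint_image_add_of_forall_sub_mem _ hkF, ?_⟩
  rw [AddSubgroup.image_sub_of_mem _ (AddSubgroup.mem_zmultiples (g k)), Set.inter_self]
  exact mul_le_of_le_one_left (Nat.cast_nonneg _) (by linarith)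

/-- The core combinatorial claim of Lemma 4.2, case (iii) of a 'good' sequence
(with `d = 0`): if the `g k` have uniformly bounded finite additive orders, the
cyclic subgroups `⟨g k⟩` are independent, and `(g k)` leaves every finite subset,
then for every finite `F`, `ε > 0` and `K` there are `k ≥ K` and a finite set `C`
with more than one element whose translates of `F` are pairwise disjoint and with
`#(C ∩ (C - g k)) ≥ (1 - ε) #C`. -/
theorem stmt14 {G : Type*} [AddCommGroup G] [Countable G] [Infinite G]
    (g : ℕ → G)
    (h1 : ∀ k, IsOfFinAddOrder (g k))
    (h2 : ∃ N : ℕ, ∀ k, addOrderOf (g k) ≤ N)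
    (hind : iSupIndep fun k : ℕ => AddSubgroup.zmultiples (g k))
    (hesc : ∀ F : Set G, F.Finite → {k : ℕ | g k ∈ F}.Finite) :
    ∀ F : Set G, F.Finite → ∀ ε : ℝ, 0 < ε → ∀ K : ℕ,
      ∃ k, K ≤ k ∧
        ∃ C : Set G, C.Finite ∧ 1 < C.ncard ∧
          (C.Pairwise fun c c' => Disjoint ((c + ·) '' F) ((c' + ·) '' F)) ∧
          (1 - ε) * (C.ncard : ℝ) ≤
            ((C ∩ (fun x => x - g k) '' C).ncard : ℝ) :=
  stmt14_general g h1 hind hesc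
end
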